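/- arXiv:2301.12714 — 5 statements merged into one kernel-verified Lean document; each statement's English description precedes it below -/
import Mathlib

section
/- Performance difference decomposition: for any two policies π, π̂ and any function f : S × A → ℝ, J(π) − J(π̂) = E_μ[(f − T^{π̂} f)(s,a)] + E_{d^π}[(T^{π̂} f − f)(s,a)] + E_{d^π}[f(s,π) − f(s,π̂)] + L_μ(π̂, f) − L_μ(π̂, Q^{π̂}), where L_μ(π̂, g) = E_μ[g(s,π̂) − g(s,a)]. -/
open Finset

lemma pull_gamma {S A : Type*} [Fintype S] [Fintype A] (γ : ℝ) (x y : S → A → ℝ) :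
    ∑ s, ∑ a, x s a * (γ * y s a) = γ * ∑ s, ∑ a, x s a * y s a := by
  rw [Finset.mul_sum]
  exact Finset.sum_congr rfl fun s _ => by
    rw [Finset.mul_sum]; exact Finset.sum_congr rfl fun a _ => by ring
lemma occ_marginal {S A : Type*} [Fintype S] [Fintype A] (γ : ℝ)
    (ρ : S → ℝ) (P : S → A → S → ℝ) (d p : S → A → ℝ)
    (hp1 : ∀ s, ∑ a, p s a = 1)
    (hd : ∀ s a, d s a = p s a * ((1 - γ) * ρ s + γ * ∑ s', ∑ a', d s' a' * P s' a' s))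
    (s : S) :
    ∑ a, d s a = (1 - γ) * ρ s + γ * ∑ s', ∑ a', d s' a' * P s' a' s := by
  rw [Finset.sum_congr rfl fun a _ => hd s a, ← Finset.sum_mul, hp1, one_mul]

lemma occ_flow {S A : Type*} [Fintype S] [Fintype A] (γ : ℝ)
    (ρ : S → ℝ) (P : S → A → S → ℝ) (d p : S → A → ℝ)
    (hp1 : ∀ s, ∑ a, p s a = 1)
    (hd : ∀ s a, d s a = p s a * ((1 - γ) * ρ s + γ * ∑ s', ∑ a', d s' a' * P s' a' s))
    (h : S → ℝ) :
    ∑ s, ∑ a, d s a * h s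
      = (1 - γ) * ∑ s, ρ s * h s + γ * ∑ s, ∑ a, d s a * ∑ s', P s a s' * h s' := by
  have key : ∀ s, ∑ a, d s a * h s
      = ((1 - γ) * ρ s + γ * ∑ s', ∑ a', d s' a' * P s' a' s) * h s := by
    intro s
    rw [← Finset.sum_mul, occ_marginal γ ρ P d p hp1 hd s]
  rw [Finset.sum_congr rfl fun s _ => key s]
  have swap : ∑ s, (∑ s', ∑ a', d s' a' * P s' a' s) * h s
      = ∑ s, ∑ a, d s a * ∑ s', P s a s' * h s' := by
    simp only [Finset.sum_mul, Finset.mul_sum]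
    rw [Finset.sum_comm]
    refine Finset.sum_congr rfl fun s' _ => ?_
    rw [Finset.sum_comm]
    refine Finset.sum_congr rfl fun a' _ => Finset.sum_congr rfl fun s _ => ?_
    ring
  rw [← swap]
  simp only [add_mul, Finset.sum_add_distrib]
  rw [Finset.mul_sum, Finset.mul_sum]
  congr 1 <;> exact Finset.sum_congr rfl fun s _ => by ring

lemma occ_pol {S A : Type*} [Fintype S] [Fintype A] (γ : ℝ)
    (ρ : S → ℝ) (P : S → A → S → ℝ) (d p : S → A → ℝ)
    (hp1 : ∀ s, ∑ a, p s a = 1)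
    (hd : ∀ s a, d s a = p s a * ((1 - γ) * ρ s + γ * ∑ s', ∑ a', d s' a' * P s' a' s))
    (g : S → A → ℝ) :
    ∑ s, ∑ a, d s a * (∑ a', p s a' * g s a') = ∑ s, ∑ a, d s a * g s a := by
  refine Finset.sum_congr rfl fun s _ => ?_
  set m := (1 - γ) * ρ s + γ * ∑ s', ∑ a', d s' a' * P s' a' s with hm
  calc ∑ a, d s a * (∑ a', p s a' * g s a')
      = (∑ a, d s a) * (∑ a', p s a' * g s a') := by rw [← Finset.sum_mul]
    _ = m * ∑ a', p s a' * g s a' := by rw [occ_marginal γ ρ P d p hp1 hd s]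
    _ = ∑ a', m * (p s a' * g s a') := by rw [Finset.mul_sum]
    _ = ∑ a, d s a * g s a := by
        refine Finset.sum_congr rfl fun a _ => ?_
        rw [hd s a]; ring

/-- Performance difference decomposition (Lemma 12 of Cheng et al.):
for any policies `π`, `π̂` (with discounted occupancies `dπ`, `dhat`), behavior
occupancy `μ`, and any `f : S × A → ℝ`,
`J(π) − J(π̂) = E_μ[(f − T^π̂ f)] + E_{dπ}[(T^π̂ f − f)] + E_{dπ}[f(s,π) − f(s,π̂)]
+ L_μ(π̂, f) − L_μ(π̂, Q^π̂)`, where `L_μ(π̂, g) = E_μ[g(s,π̂) − g(s,a)]`. -/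
theorem performance_difference_decomposition
    {S A : Type*} [Fintype S] [Fintype A]
    (γ : ℝ) (hγ0 : 0 ≤ γ) (hγ1 : γ < 1)
    (ρ : S → ℝ) (hρ0 : ∀ s, 0 ≤ ρ s) (hρ1 : ∑ s, ρ s = 1)
    (P : S → A → S → ℝ) (hP0 : ∀ s a s', 0 ≤ P s a s') (hP1 : ∀ s a, ∑ s', P s a s' = 1)
    (r : S → A → ℝ) (hr : ∀ s a, 0 ≤ r s a ∧ r s a ≤ 1)
    -- the three policies: target π, comparator π̂, behavior b
    (pol polhat polb : S → A → ℝ)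
    (hpol : ∀ s a, 0 ≤ pol s a) (hpol1 : ∀ s, ∑ a, pol s a = 1)
    (hpolhat : ∀ s a, 0 ≤ polhat s a) (hpolhat1 : ∀ s, ∑ a, polhat s a = 1)
    (hpolb : ∀ s a, 0 ≤ polb s a) (hpolb1 : ∀ s, ∑ a, polb s a = 1)
    -- discounted occupancy measures, characterized by the Bellman flow equations
    (dπ dhat μ : S → A → ℝ)
    (hdπ : ∀ s a, dπ s a = pol s a * ((1 - γ) * ρ s + γ * ∑ s', ∑ a', dπ s' a' * P s' a' s))
    (hdhat : ∀ s a, dhat s a = polhat s a * ((1 - γ) * ρ s + γ * ∑ s', ∑ a', dhat s' a' * P s' a' s))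
    (hμ : ∀ s a, μ s a = polb s a * ((1 - γ) * ρ s + γ * ∑ s', ∑ a', μ s' a' * P s' a' s))
    -- Q^π̂ is the fixed point of the Bellman operator T^π̂
    (Q : S → A → ℝ)
    (hQ : ∀ s a, Q s a = r s a + γ * ∑ s', P s a s' * ∑ a', polhat s' a' * Q s' a')
    (f : S → A → ℝ) :
    (∑ s, ∑ a, dπ s a * r s a) - (∑ s, ∑ a, dhat s a * r s a)
      = (∑ s, ∑ a, μ s a *
          (f s a - (r s a + γ * ∑ s', P s a s' * ∑ a', polhat s' a' * f s' a')))
      + (∑ s, ∑ a, dπ s a *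
          ((r s a + γ * ∑ s', P s a s' * ∑ a', polhat s' a' * f s' a') - f s a))
      + (∑ s, ∑ a, dπ s a *
          ((∑ a', pol s a' * f s a') - (∑ a', polhat s a' * f s a')))
      + ((∑ s, ∑ a, μ s a * ((∑ a', polhat s a' * f s a') - f s a))
         - (∑ s, ∑ a, μ s a * ((∑ a', polhat s a' * Q s a') - Q s a))) := by
  -- split the goal's sums into atomic sums
  have e1 : (∑ s, ∑ a, μ s a *
        (f s a - (r s a + γ * ∑ s', P s a s' * ∑ a', polhat s' a' * f s' a')))
      = (∑ s, ∑ a, μ s a * f s a) - (∑ s, ∑ a, μ s a * r s a)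
        - γ * ∑ s, ∑ a, μ s a * ∑ s', P s a s' * ∑ a', polhat s' a' * f s' a' := by
    have h : ∀ s a, μ s a * (f s a - (r s a + γ * ∑ s', P s a s' * ∑ a', polhat s' a' * f s' a'))
        = μ s a * f s a - μ s a * r s a
          - μ s a * (γ * ∑ s', P s a s' * ∑ a', polhat s' a' * f s' a') := fun s a => by ring
    simp only [h, Finset.sum_sub_distrib, pull_gamma]
  have e2 : (∑ s, ∑ a, dπ s a *
        ((r s a + γ * ∑ s', P s a s' * ∑ a', polhat s' a' * f s' a') - f s a))
      = (∑ s, ∑ a, dπ s a * r s a)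
        + γ * (∑ s, ∑ a, dπ s a * ∑ s', P s a s' * ∑ a', polhat s' a' * f s' a')
        - (∑ s, ∑ a, dπ s a * f s a) := by
    have h : ∀ s a, dπ s a * ((r s a + γ * ∑ s', P s a s' * ∑ a', polhat s' a' * f s' a') - f s a)
        = dπ s a * r s a + dπ s a * (γ * ∑ s', P s a s' * ∑ a', polhat s' a' * f s' a')
          - dπ s a * f s a := fun s a => by ring
    simp only [h, Finset.sum_sub_distrib, Finset.sum_add_distrib, pull_gamma]
  have e3 : (∑ s, ∑ a, dπ s a *
        ((∑ a', pol s a' * f s a') - (∑ a', polhat s a' * f s a')))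
      = (∑ s, ∑ a, dπ s a * ∑ a', pol s a' * f s a')
        - (∑ s, ∑ a, dπ s a * ∑ a', polhat s a' * f s a') := by
    simp only [mul_sub, Finset.sum_sub_distrib]
  have e4 : (∑ s, ∑ a, μ s a * ((∑ a', polhat s a' * f s a') - f s a))
      = (∑ s, ∑ a, μ s a * ∑ a', polhat s a' * f s a') - (∑ s, ∑ a, μ s a * f s a) := by
    simp only [mul_sub, Finset.sum_sub_distrib]
  have e5 : (∑ s, ∑ a, μ s a * ((∑ a', polhat s a' * Q s a') - Q s a))
      = (∑ s, ∑ a, μ s a * ∑ a', polhat s a' * Q s a') - (∑ s, ∑ a, μ s a * Q s a) := by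
    simp only [mul_sub, Finset.sum_sub_distrib]
  -- flow identities
  have fμF := occ_flow γ ρ P μ polb hpolb1 hμ (fun s => ∑ a', polhat s a' * f s a')
  have fdF := occ_flow γ ρ P dπ pol hpol1 hdπ (fun s => ∑ a', polhat s a' * f s a')
  have fμQ := occ_flow γ ρ P μ polb hpolb1 hμ (fun s => ∑ a', polhat s a' * Q s a')
  have fhQ := occ_flow γ ρ P dhat polhat hpolhat1 hdhat (fun s => ∑ a', polhat s a' * Q s a')
  -- policy identities
  have pπ := occ_pol γ ρ P dπ pol hpol1 hdπ f
  have ph := occ_pol γ ρ P dhat polhat hpolhat1 hdhat Q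
  -- Bellman identities
  have bellμ : (∑ s, ∑ a, μ s a * Q s a)
      = (∑ s, ∑ a, μ s a * r s a)
        + γ * ∑ s, ∑ a, μ s a * ∑ s', P s a s' * ∑ a', polhat s' a' * Q s' a' := by
    have h : ∀ s a, μ s a * Q s a
        = μ s a * r s a + μ s a * (γ * ∑ s', P s a s' * ∑ a', polhat s' a' * Q s' a') :=
      fun s a => by rw [hQ s a]; ring
    simp only [h, Finset.sum_add_distrib, pull_gamma]
  have bellh : (∑ s, ∑ a, dhat s a * Q s a)
      = (∑ s, ∑ a, dhat s a * r s a)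
        + γ * ∑ s, ∑ a, dhat s a * ∑ s', P s a s' * ∑ a', polhat s' a' * Q s' a' := by
    have h : ∀ s a, dhat s a * Q s a
        = dhat s a * r s a + dhat s a * (γ * ∑ s', P s a s' * ∑ a', polhat s' a' * Q s' a') :=
      fun s a => by rw [hQ s a]; ring
    simp only [h, Finset.sum_add_distrib, pull_gamma]
  rw [e1, e2, e3, e4, e5]
  linear_combination (-1 : ℝ) * fμF + fdF - pπ + fμQ - bellμ - fhQ + ph + bellh
end

section
/- Value error bound from Bellman residuals (Lemma 13 of Cheng et al. style): for any policy π and function f, |L_μ(π, Q^π) − L_μ(π, f)| ≤ ‖f − T^π f‖_{2,μ} + ‖f − T^π f‖_{2,d^π}, where L_μ(π, g) = E_μ[g(s,π) − g(s,a)]. -/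
open Finset

lemma occ_nonneg {S A : Type*} [Fintype S] [Fintype A]
    (γ : ℝ) (hγ0 : 0 ≤ γ) (hγ1 : γ < 1)
    (ρ : S → ℝ) (hρ0 : ∀ s, 0 ≤ ρ s)
    (P : S → A → S → ℝ) (hP0 : ∀ s a s', 0 ≤ P s a s') (hP1 : ∀ s a, ∑ s', P s a s' = 1)
    (p : S → A → ℝ) (hp0 : ∀ s a, 0 ≤ p s a) (hp1 : ∀ s, ∑ a, p s a = 1)
    (ν : S → A → ℝ)
    (hν : ∀ s a, ν s a = p s a * ((1 - γ) * ρ s + γ * ∑ s', ∑ a', ν s' a' * P s' a' s)) :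
    ∀ s a, 0 ≤ ν s a := by
  set m : S → A → ℝ := fun s a => max 0 (-ν s a) with hm
  have hm0 : ∀ s a, 0 ≤ m s a := fun s a => le_max_left _ _
  have hmν : ∀ s a, -ν s a ≤ m s a := fun s a => le_max_right _ _
  have hSnn : ∀ s, 0 ≤ ∑ s', ∑ a', m s' a' * P s' a' s := by
    intro s
    exact Finset.sum_nonneg fun s' _ => Finset.sum_nonneg fun a' _ =>
      mul_nonneg (hm0 _ _) (hP0 _ _ _)
  have key : ∀ s a, m s a ≤ p s a * (γ * ∑ s', ∑ a', m s' a' * P s' a' s) := by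
    intro s a
    apply max_le
    · exact mul_nonneg (hp0 s a) (mul_nonneg hγ0 (hSnn s))
    · have h2 : -(∑ s', ∑ a', ν s' a' * P s' a' s) ≤ ∑ s', ∑ a', m s' a' * P s' a' s := by
        rw [← Finset.sum_neg_distrib]
        refine Finset.sum_le_sum fun s' _ => ?_
        rw [← Finset.sum_neg_distrib]
        refine Finset.sum_le_sum fun a' _ => ?_
        rw [← neg_mul]
        exact mul_le_mul_of_nonneg_right (hmν _ _) (hP0 _ _ _)
      have h3 : -((1 - γ) * ρ s + γ * ∑ s', ∑ a', ν s' a' * P s' a' s)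
          ≤ γ * ∑ s', ∑ a', m s' a' * P s' a' s := by
        have h4 : 0 ≤ (1 - γ) * ρ s := mul_nonneg (by linarith) (hρ0 s)
        nlinarith [mul_le_mul_of_nonneg_left h2 hγ0]
      calc -ν s a = p s a * (-((1 - γ) * ρ s + γ * ∑ s', ∑ a', ν s' a' * P s' a' s)) := by
            rw [hν s a]; ring
        _ ≤ p s a * (γ * ∑ s', ∑ a', m s' a' * P s' a' s) :=
            mul_le_mul_of_nonneg_left h3 (hp0 s a)
  have hsum : ∑ s, ∑ a, m s a ≤ γ * ∑ s, ∑ a, m s a := by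
    calc ∑ s, ∑ a, m s a
        ≤ ∑ s, ∑ a, p s a * (γ * ∑ s', ∑ a', m s' a' * P s' a' s) :=
          Finset.sum_le_sum fun s _ => Finset.sum_le_sum fun a _ => key s a
      _ = ∑ s, (γ * ∑ s', ∑ a', m s' a' * P s' a' s) := by
          refine Finset.sum_congr rfl fun s _ => ?_
          rw [← Finset.sum_mul, hp1 s, one_mul]
      _ = γ * ∑ s, ∑ s', ∑ a', m s' a' * P s' a' s := by rw [Finset.mul_sum]
      _ = γ * ∑ s', ∑ a', m s' a' * ∑ s, P s' a' s := by
          rw [Finset.sum_comm]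
          congr 1
          refine Finset.sum_congr rfl fun s' _ => ?_
          rw [Finset.sum_comm]
          refine Finset.sum_congr rfl fun a' _ => ?_
          rw [Finset.mul_sum]
      _ = γ * ∑ s', ∑ a', m s' a' := by simp_rw [hP1, mul_one]
  have hN0 : 0 ≤ ∑ s, ∑ a, m s a :=
    Finset.sum_nonneg fun s _ => Finset.sum_nonneg fun a _ => hm0 s a
  have hN : ∑ s, ∑ a, m s a = 0 := by nlinarith
  have hz : ∀ s a, m s a = 0 := by
    intro s a
    have h1 : ∀ s ∈ Finset.univ (α := S), (0:ℝ) ≤ ∑ a, m s a :=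
      fun s _ => Finset.sum_nonneg fun a _ => hm0 s a
    have h2 := (Finset.sum_eq_zero_iff_of_nonneg h1).mp hN s (Finset.mem_univ s)
    have h3 := (Finset.sum_eq_zero_iff_of_nonneg (fun a _ => hm0 s a)).mp h2 a (Finset.mem_univ a)
    exact h3
  intro s a
  have h := hmν s a
  rw [hz s a] at h
  linarith

lemma sum_P_swap {S A : Type*} [Fintype S] [Fintype A]
    (ν : S → A → ℝ) (P : S → A → S → ℝ) (hP1 : ∀ s a, ∑ s', P s a s' = 1) :
    ∑ s, ∑ s', ∑ a', ν s' a' * P s' a' s = ∑ s, ∑ a, ν s a := by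
  rw [Finset.sum_comm]
  refine Finset.sum_congr rfl fun s' _ => ?_
  rw [Finset.sum_comm]
  refine Finset.sum_congr rfl fun a' _ => ?_
  rw [← Finset.mul_sum, hP1, mul_one]

lemma occ_marg {S A : Type*} [Fintype S] [Fintype A]
    (γ : ℝ) (ρ : S → ℝ) (P : S → A → S → ℝ)
    (p : S → A → ℝ) (hp1 : ∀ s, ∑ a, p s a = 1)
    (ν : S → A → ℝ)
    (hν : ∀ s a, ν s a = p s a * ((1 - γ) * ρ s + γ * ∑ s', ∑ a', ν s' a' * P s' a' s)) :
    ∀ s, ∑ a, ν s a = (1 - γ) * ρ s + γ * ∑ s', ∑ a', ν s' a' * P s' a' s := by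
  intro s
  calc ∑ a, ν s a
      = ∑ a, p s a * ((1 - γ) * ρ s + γ * ∑ s', ∑ a', ν s' a' * P s' a' s) :=
        Finset.sum_congr rfl fun a _ => hν s a
    _ = (∑ a, p s a) * ((1 - γ) * ρ s + γ * ∑ s', ∑ a', ν s' a' * P s' a' s) :=
        (Finset.sum_mul _ _ _).symm
    _ = (1 - γ) * ρ s + γ * ∑ s', ∑ a', ν s' a' * P s' a' s := by rw [hp1, one_mul]

lemma occ_mass {S A : Type*} [Fintype S] [Fintype A]
    (γ : ℝ) (hγ1 : γ < 1)
    (ρ : S → ℝ) (hρ1 : ∑ s, ρ s = 1)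
    (P : S → A → S → ℝ) (hP1 : ∀ s a, ∑ s', P s a s' = 1)
    (p : S → A → ℝ) (hp1 : ∀ s, ∑ a, p s a = 1)
    (ν : S → A → ℝ)
    (hν : ∀ s a, ν s a = p s a * ((1 - γ) * ρ s + γ * ∑ s', ∑ a', ν s' a' * P s' a' s)) :
    ∑ s, ∑ a, ν s a = 1 := by
  have h1 : ∑ s, ∑ a, ν s a
      = (1 - γ) * ∑ s, ρ s + γ * ∑ s, ∑ s', ∑ a', ν s' a' * P s' a' s := by
    rw [Finset.sum_congr rfl fun s _ => occ_marg γ ρ P p hp1 ν hν s,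
      Finset.sum_add_distrib, ← Finset.mul_sum, ← Finset.mul_sum]
  rw [hρ1, mul_one, sum_P_swap ν P hP1] at h1
  have hg : (1:ℝ) - γ ≠ 0 := by linarith
  nlinarith [h1]

lemma cs_bound {S A : Type*} [Fintype S] [Fintype A] (w e : S → A → ℝ)
    (hw : ∀ s a, 0 ≤ w s a) (hw1 : ∑ s, ∑ a, w s a ≤ 1) :
    |∑ s, ∑ a, w s a * e s a| ≤ Real.sqrt (∑ s, ∑ a, w s a * e s a ^ 2) := by
  apply Real.abs_le_sqrt
  have h := Finset.sum_mul_sq_le_sq_mul_sq (Finset.univ : Finset (S × A))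
    (fun i => Real.sqrt (w i.1 i.2)) (fun i => Real.sqrt (w i.1 i.2) * e i.1 i.2)
  have e1 : ∀ i : S × A, Real.sqrt (w i.1 i.2) * (Real.sqrt (w i.1 i.2) * e i.1 i.2)
      = w i.1 i.2 * e i.1 i.2 := fun i => by
    rw [← mul_assoc, Real.mul_self_sqrt (hw i.1 i.2)]
  have e2 : ∀ i : S × A, Real.sqrt (w i.1 i.2) ^ 2 = w i.1 i.2 := fun i =>
    Real.sq_sqrt (hw i.1 i.2)
  have e3 : ∀ i : S × A, (Real.sqrt (w i.1 i.2) * e i.1 i.2) ^ 2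
      = w i.1 i.2 * e i.1 i.2 ^ 2 := fun i => by
    rw [mul_pow, e2 i]
  simp_rw [e1, e2, e3] at h
  have hA : (∑ i : S × A, w i.1 i.2 * e i.1 i.2) = ∑ s, ∑ a, w s a * e s a :=
    Fintype.sum_prod_type _
  have hB : (∑ i : S × A, w i.1 i.2) = ∑ s, ∑ a, w s a := Fintype.sum_prod_type _
  have hC : (∑ i : S × A, w i.1 i.2 * e i.1 i.2 ^ 2) = ∑ s, ∑ a, w s a * e s a ^ 2 :=
    Fintype.sum_prod_type _
  rw [hA, hB, hC] at h
  have hq : 0 ≤ ∑ s, ∑ a, w s a * e s a ^ 2 :=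
    Finset.sum_nonneg fun s _ => Finset.sum_nonneg fun a _ =>
      mul_nonneg (hw s a) (sq_nonneg _)
  nlinarith [h]

lemma occ_sum_g {S A : Type*} [Fintype S] [Fintype A] (γ : ℝ)
    (P : S → A → S → ℝ) (ν : S → A → ℝ) (g ε : S → A → ℝ) (gb : S → ℝ)
    (hg : ∀ s a, g s a = -(ε s a) + γ * ∑ s', P s a s' * gb s') :
    ∑ s, ∑ a, ν s a * g s a
      = -(∑ s, ∑ a, ν s a * ε s a)
        + γ * ∑ s', (∑ s, ∑ a, ν s a * P s a s') * gb s' := by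
  have step1 : ∑ s, ∑ a, ν s a * g s a
      = ∑ s, ∑ a, (-(ν s a * ε s a) + γ * ∑ s', ν s a * P s a s' * gb s') := by
    refine Finset.sum_congr rfl fun s _ => Finset.sum_congr rfl fun a _ => ?_
    rw [hg s a, mul_add, mul_neg, Finset.mul_sum]
    congr 1
    rw [Finset.mul_sum, Finset.mul_sum]
    refine Finset.sum_congr rfl fun s' _ => by ring
  rw [step1]
  simp_rw [Finset.sum_add_distrib, Finset.sum_neg_distrib, ← Finset.mul_sum]
  congr 1
  congr 1
  -- ∑ s, ∑ a, ∑ s', ν s a * P s a s' * gb s' = ∑ s', (∑ s, ∑ a, ν s a * P s a s') * gb s'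
  have h1 : ∀ s, ∑ a, ∑ s', ν s a * P s a s' * gb s'
      = ∑ s', ∑ a, ν s a * P s a s' * gb s' := fun s => Finset.sum_comm

  rw [Finset.sum_congr rfl fun s _ => h1 s, Finset.sum_comm]
  refine Finset.sum_congr rfl fun s' _ => ?_
  rw [Finset.sum_mul]
  refine Finset.sum_congr rfl fun s _ => ?_
  rw [Finset.sum_mul]

lemma occ_sum_h {S A : Type*} [Fintype S] [Fintype A] (γ : ℝ) (ρ : S → ℝ)
    (P : S → A → S → ℝ) (p ν : S → A → ℝ)
    (hp1 : ∀ s, ∑ a, p s a = 1)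
    (hν : ∀ s a, ν s a = p s a * ((1 - γ) * ρ s + γ * ∑ s', ∑ a', ν s' a' * P s' a' s))
    (h : S → ℝ) :
    ∑ s, (∑ a, ν s a) * h s
      = (1 - γ) * ∑ s, ρ s * h s
        + γ * ∑ s, (∑ s', ∑ a', ν s' a' * P s' a' s) * h s := by
  calc ∑ s, (∑ a, ν s a) * h s
      = ∑ s, ((1 - γ) * (ρ s * h s)
          + γ * ((∑ s', ∑ a', ν s' a' * P s' a' s) * h s)) := by
        refine Finset.sum_congr rfl fun s _ => ?_
        rw [occ_marg γ ρ P p hp1 ν hν s]; ring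
    _ = _ := by rw [Finset.sum_add_distrib, ← Finset.mul_sum, ← Finset.mul_sum]

/-- Value error bound from Bellman residuals (Lemma 13 of Cheng et al. style):
`|L_μ(π, Q^π) − L_μ(π, f)| ≤ ‖f − T^π f‖_{2,μ} + ‖f − T^π f‖_{2,dπ}`,
where `L_μ(π, g) = E_μ[g(s,π) − g(s,a)]`. -/
theorem value_error_bound_from_bellman_residuals
    {S A : Type*} [Fintype S] [Fintype A]
    (γ : ℝ) (hγ0 : 0 ≤ γ) (hγ1 : γ < 1)
    (ρ : S → ℝ) (hρ0 : ∀ s, 0 ≤ ρ s) (hρ1 : ∑ s, ρ s = 1)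
    (P : S → A → S → ℝ) (hP0 : ∀ s a s', 0 ≤ P s a s') (hP1 : ∀ s a, ∑ s', P s a s' = 1)
    (r : S → A → ℝ) (hr : ∀ s a, 0 ≤ r s a ∧ r s a ≤ 1)
    -- policy π and behavior policy b
    (pol polb : S → A → ℝ)
    (hpol : ∀ s a, 0 ≤ pol s a) (hpol1 : ∀ s, ∑ a, pol s a = 1)
    (hpolb : ∀ s a, 0 ≤ polb s a) (hpolb1 : ∀ s, ∑ a, polb s a = 1)
    -- discounted occupancies of π and of the behavior policy
    (dπ μ : S → A → ℝ)
    (hdπ : ∀ s a, dπ s a = pol s a * ((1 - γ) * ρ s + γ * ∑ s', ∑ a', dπ s' a' * P s' a' s))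
    (hμ : ∀ s a, μ s a = polb s a * ((1 - γ) * ρ s + γ * ∑ s', ∑ a', μ s' a' * P s' a' s))
    -- Q^π is the fixed point of T^π
    (Q : S → A → ℝ)
    (hQ : ∀ s a, Q s a = r s a + γ * ∑ s', P s a s' * ∑ a', pol s' a' * Q s' a')
    (f : S → A → ℝ) :
    |(∑ s, ∑ a, μ s a * ((∑ a', pol s a' * Q s a') - Q s a))
      - (∑ s, ∑ a, μ s a * ((∑ a', pol s a' * f s a') - f s a))|
      ≤ Real.sqrt (∑ s, ∑ a, μ s a *
          (f s a - (r s a + γ * ∑ s', P s a s' * ∑ a', pol s' a' * f s' a')) ^ 2)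
        + Real.sqrt (∑ s, ∑ a, dπ s a *
          (f s a - (r s a + γ * ∑ s', P s a s' * ∑ a', pol s' a' * f s' a')) ^ 2) := by
  classical
  set E : S → A → ℝ := fun s a =>
    f s a - (r s a + γ * ∑ s', P s a s' * ∑ a', pol s' a' * f s' a') with hE
  set g : S → A → ℝ := fun s a => Q s a - f s a with hgdef
  set gb : S → ℝ := fun s => ∑ a, pol s a * g s a with hgbdef
  -- basic facts about the occupancies
  have hμ0 : ∀ s a, 0 ≤ μ s a :=
    occ_nonneg γ hγ0 hγ1 ρ hρ0 P hP0 hP1 polb hpolb hpolb1 μ hμ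
  have hd0 : ∀ s a, 0 ≤ dπ s a :=
    occ_nonneg γ hγ0 hγ1 ρ hρ0 P hP0 hP1 pol hpol hpol1 dπ hdπ
  have hμ1 : ∑ s, ∑ a, μ s a = 1 := occ_mass γ hγ1 ρ hρ1 P hP1 polb hpolb1 μ hμ
  have hd1 : ∑ s, ∑ a, dπ s a = 1 := occ_mass γ hγ1 ρ hρ1 P hP1 pol hpol1 dπ hdπ
  -- Bellman residual decomposition of g = Q − f
  have hgb_eq : ∀ s, gb s = (∑ a', pol s a' * Q s a') - ∑ a', pol s a' * f s a' := by
    intro s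
    rw [hgbdef, ← Finset.sum_sub_distrib]
    exact Finset.sum_congr rfl fun a _ => by rw [hgdef]; ring
  have hg' : ∀ s a, g s a = -(E s a) + γ * ∑ s', P s a s' * gb s' := by
    intro s a
    have h1 : (∑ s', P s a s' * gb s')
        = (∑ s', P s a s' * ∑ a', pol s' a' * Q s' a')
          - ∑ s', P s a s' * ∑ a', pol s' a' * f s' a' := by
      rw [← Finset.sum_sub_distrib]
      exact Finset.sum_congr rfl fun s' _ => by rw [hgb_eq s']; ring
    rw [hgdef, hE, h1]
    simp only []
    rw [hQ s a]
    ring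
  -- sums of g against the occupancies
  have hμg := occ_sum_g γ P μ g E gb hg'
  have hdg := occ_sum_g γ P dπ g E gb hg'
  have hμh := occ_sum_h γ ρ P polb μ hpolb1 hμ gb
  have hdh := occ_sum_h γ ρ P pol dπ hpol1 hdπ gb
  -- the two flow-expansions share the term γ * ∑ mν·gb after reindexing
  have hreidxμ : (∑ s', (∑ s, ∑ a, μ s a * P s a s') * gb s')
      = ∑ s, (∑ s', ∑ a', μ s' a' * P s' a' s) * gb s := rfl
  have hreidxd : (∑ s', (∑ s, ∑ a, dπ s a * P s a s') * gb s')
      = ∑ s, (∑ s', ∑ a', dπ s' a' * P s' a' s) * gb s := rfl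
  -- dπ-sum of g equals its marginal against gb
  have hd_a : ∑ s, ∑ a, dπ s a * g s a = ∑ s, (∑ a, dπ s a) * gb s := by
    refine Finset.sum_congr rfl fun s _ => ?_
    have c1 : ∑ a, dπ s a * g s a
        = ((1 - γ) * ρ s + γ * ∑ s', ∑ a', dπ s' a' * P s' a' s) * gb s := by
      rw [hgbdef]
      simp only []
      rw [Finset.mul_sum]
      exact Finset.sum_congr rfl fun a _ => by rw [hdπ s a]; ring
    rw [c1, occ_marg γ ρ P pol hpol1 dπ hdπ s]
  -- hence (1−γ)·∑ ρ·gb = −∑ dπ·E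
  have hkeyd : (1 - γ) * ∑ s, ρ s * gb s = -(∑ s, ∑ a, dπ s a * E s a) := by
    rw [hreidxd] at hdg
    rw [hd_a, hdh] at hdg
    linarith
  -- μ-sum of gb against marginal
  have hμ_b : ∑ s, ∑ a, μ s a * gb s = ∑ s, (∑ a, μ s a) * gb s :=
    Finset.sum_congr rfl fun s _ => by rw [Finset.sum_mul]
  -- the main identity
  have hL : (∑ s, ∑ a, μ s a * ((∑ a', pol s a' * Q s a') - Q s a))
      - (∑ s, ∑ a, μ s a * ((∑ a', pol s a' * f s a') - f s a))
      = (∑ s, ∑ a, μ s a * E s a) - (∑ s, ∑ a, dπ s a * E s a) := by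
    have step : (∑ s, ∑ a, μ s a * ((∑ a', pol s a' * Q s a') - Q s a))
        - (∑ s, ∑ a, μ s a * ((∑ a', pol s a' * f s a') - f s a))
        = (∑ s, ∑ a, μ s a * gb s) - ∑ s, ∑ a, μ s a * g s a := by
      rw [← Finset.sum_sub_distrib, ← Finset.sum_sub_distrib]
      refine Finset.sum_congr rfl fun s _ => ?_
      rw [← Finset.sum_sub_distrib, ← Finset.sum_sub_distrib]
      refine Finset.sum_congr rfl fun a _ => ?_
      rw [hgb_eq s, hgdef]
      ring
    rw [step, hμ_b, hμh]
    rw [hreidxμ] at hμg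
    rw [hμg]
    rw [hkeyd]
    ring
  rw [hL]
  have b1 : |∑ s, ∑ a, μ s a * E s a| ≤ Real.sqrt (∑ s, ∑ a, μ s a * E s a ^ 2) :=
    cs_bound μ E hμ0 hμ1.le
  have b2 : |∑ s, ∑ a, dπ s a * E s a| ≤ Real.sqrt (∑ s, ∑ a, dπ s a * E s a ^ 2) :=
    cs_bound dπ E hd0 hd1.le
  calc |(∑ s, ∑ a, μ s a * E s a) - ∑ s, ∑ a, dπ s a * E s a|
      ≤ |∑ s, ∑ a, μ s a * E s a| + |∑ s, ∑ a, dπ s a * E s a| := abs_sub _ _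
    _ ≤ _ := add_le_add b1 b2
end

section
/- In the ATAC lower-bound bandit construction, if the empirical reward mean of arm a₂ satisfies r̂(a₂) ≥ 1/2 + 2Δ (where 0 < Δ ≤ 1/10), then the empirical squared Bellman regularizer of f₂ satisfies β·μ(a₂)·(r̂(a₂)(1/2 − 2Δ)² + (1 − r̂(a₂))(1/2 + 2Δ)²) ≤ β·μ(a₂)·(1/4 − 4Δ²), while that of f₁ equals β·μ(a₂)/4; hence f₂'s regularizer is smaller by at least 4βμ(a₂)Δ². -/
/-- ATAC lower-bound bandit construction: if the empirical reward mean of arm `a₂`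
satisfies `r̂(a₂) ≥ 1/2 + 2Δ` (with `0 < Δ ≤ 1/10`, `r̂(a₂) ≤ 1`), then the
empirical squared-Bellman regularizer of `f₂` satisfies
`β μ(a₂) (r̂(1/2 − 2Δ)² + (1 − r̂)(1/2 + 2Δ)²) ≤ β μ(a₂) (1/4 − 4Δ²)`,
while that of `f₁` equals `β μ(a₂)/4`; hence `f₂`'s regularizer is smaller by at
least `4 β μ(a₂) Δ²`. -/
theorem atac_bandit_regularizer_gap (Δ β μ₂ rhat : ℝ)
    (hΔ0 : 0 < Δ) (hΔ : Δ ≤ 1 / 10)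
    (hr : 1 / 2 + 2 * Δ ≤ rhat) (hr1 : rhat ≤ 1)
    (hβ : 0 < β) (hμ₂ : 0 < μ₂) :
    β * μ₂ * (rhat * (1 / 2 - 2 * Δ) ^ 2 + (1 - rhat) * (1 / 2 + 2 * Δ) ^ 2)
        ≤ β * μ₂ * (1 / 4 - 4 * Δ ^ 2) ∧
    4 * β * μ₂ * Δ ^ 2
        ≤ β * μ₂ / 4
          - β * μ₂ * (rhat * (1 / 2 - 2 * Δ) ^ 2 + (1 - rhat) * (1 / 2 + 2 * Δ) ^ 2) := by
  have key : rhat * (1 / 2 - 2 * Δ) ^ 2 + (1 - rhat) * (1 / 2 + 2 * Δ) ^ 2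
      ≤ 1 / 4 - 4 * Δ ^ 2 := by
    nlinarith [mul_nonneg hΔ0.le (by linarith : (0:ℝ) ≤ rhat - (1 / 2 + 2 * Δ))]
  have hbm : 0 < β * μ₂ := mul_pos hβ hμ₂
  have h1 : β * μ₂ * (rhat * (1 / 2 - 2 * Δ) ^ 2 + (1 - rhat) * (1 / 2 + 2 * Δ) ^ 2)
      ≤ β * μ₂ * (1 / 4 - 4 * Δ ^ 2) := by
    exact mul_le_mul_of_nonneg_left key hbm.le
  refine ⟨h1, ?_⟩
  nlinarith [h1]
end

section
/- Anti-concentration of the symmetric binomial: there exist universal constants c₁, c₂ > 0 such that for X ∼ Bin(n, 1/2) and any t ∈ [0, 1/8], P(X ≥ n/2 + nt) ≥ c₁·e^{−c₂·t²·n}. -/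
/-!
Window argument. Let `K = ⌈n/2 + nt⌉` and `m = ⌊√n⌋`. Past the middle the binomial coefficients
decrease, so the tail is at least `(m + 1) C(n, K + m) 2⁻ⁿ`. Write `K + m = ⌊n/2⌋ + j`, where
`j ≤ nt + m + 2 ≤ n/4`. Every ratio `C(n, k + 1) / C(n, k)` between `⌊n/2⌋` and `K + m` is at
least `(n - 2j) / (n + 2j) ≥ e^{-6j/n}`, hence `C(n, K + m) ≥ C(n, ⌊n/2⌋) e^{-6j²/n}`. Finally
`C(n, ⌊n/2⌋) ≥ 2ⁿ / √(8n)`, so the `m + 1 ≥ √n` terms give `e^{-12 t² n - 108} / 3`.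
For `n < 100` the single term `k = n` already suffices.
-/

open Finset

theorem Real.exp_neg_three_mul_le_one_sub_div_one_add {x : ℝ} (hx0 : 0 ≤ x) (hx : x ≤ 1 / 2) :
    Real.exp (-(3 * x)) ≤ (1 - x) / (1 + x) := by
  have hcube : (1 + x) ^ 3 ≤ Real.exp (3 * x) := by
    rw [show 3 * x = (3 : ℕ) * x by norm_num, Real.exp_nat_mul]
    gcongr
    linarith [Real.add_one_le_exp x]
  have hquad : 0 ≤ 1 - x - x ^ 2 := by nlinarith
  have hpoly : 1 + x ≤ (1 + x) ^ 3 * (1 - x) := by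
    nlinarith [mul_nonneg (mul_nonneg (by linarith : (0 : ℝ) ≤ 1 + x) hx0) hquad]
  rw [Real.exp_neg, le_div_iff₀ (by linarith), inv_mul_le_iff₀ (Real.exp_pos _)]
  nlinarith [mul_le_mul_of_nonneg_right hcube (by linarith : (0 : ℝ) ≤ 1 - x)]

namespace Nat

theorem sixteen_pow_le_four_mul_self_mul_centralBinom_sq {k : ℕ} (hk : 0 < k) :
    16 ^ k ≤ 4 * k * centralBinom k ^ 2 := by
  induction k, hk using le_induction with
  | base => decide
  | succ k hk ih =>
    have hsq :
        (k + 1) ^ 2 * centralBinom (k + 1) ^ 2 = 4 * (2 * k + 1) ^ 2 * centralBinom k ^ 2 := by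
      rw [← mul_pow, succ_mul_centralBinom_succ]; ring
    refine Nat.le_of_mul_le_mul_left (c := k + 1) ?_ k.succ_pos
    calc (k + 1) * 16 ^ (k + 1) = 16 * (k + 1) * 16 ^ k := by ring
      _ ≤ 16 * (k + 1) * (4 * k * centralBinom k ^ 2) := by gcongr
      _ = 16 * (4 * k * (k + 1)) * centralBinom k ^ 2 := by ring
      _ ≤ 16 * (2 * k + 1) ^ 2 * centralBinom k ^ 2 := by gcongr; nlinarith
      _ = 4 * ((k + 1) ^ 2 * centralBinom (k + 1) ^ 2) := by rw [hsq]; ring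
      _ = (k + 1) * (4 * (k + 1) * centralBinom (k + 1) ^ 2) := by ring

theorem four_pow_le_eight_mul_self_mul_choose_half_sq {n : ℕ} (hn : 0 < n) :
    4 ^ n ≤ 8 * n * n.choose (n / 2) ^ 2 := by
  obtain ⟨k, rfl | rfl⟩ := n.even_or_odd'
  · have hk : 0 < k := by omega
    rw [show 2 * k / 2 = k by omega, ← centralBinom_eq_two_mul_choose, pow_mul,
      show 4 ^ 2 = 16 by rfl]
    nlinarith [sixteen_pow_le_four_mul_self_mul_centralBinom_sq hk]
  · rcases k.eq_zero_or_pos with rfl | hk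
    · decide
    have hmono : centralBinom k ≤ (2 * k + 1).choose k := by
      rw [centralBinom_eq_two_mul_choose]; exact choose_le_succ _ _
    rw [show (2 * k + 1) / 2 = k by omega, pow_succ, pow_mul, show 4 ^ 2 = 16 by rfl]
    nlinarith [sixteen_pow_le_four_mul_self_mul_centralBinom_sq hk, Nat.pow_le_pow_left hmono 2]

theorem two_pow_le_three_mul_sqrt_succ_mul_choose_half {n : ℕ} (hn : 0 < n) :
    2 ^ n ≤ 3 * (n.sqrt + 1) * n.choose (n / 2) := by
  have hsqrt : n < (n.sqrt + 1) ^ 2 := by rw [pow_two]; exact lt_succ_sqrt n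
  refine (Nat.pow_le_pow_iff_left two_ne_zero).1 ?_
  calc (2 ^ n) ^ 2 = 4 ^ n := by rw [← pow_mul, mul_comm, pow_mul]; norm_num
    _ ≤ 8 * n * n.choose (n / 2) ^ 2 := four_pow_le_eight_mul_self_mul_choose_half_sq hn
    _ ≤ 9 * (n.sqrt + 1) ^ 2 * n.choose (n / 2) ^ 2 := by gcongr; omega
    _ = _ := by ring

theorem choose_le_choose_of_half_le {n a b : ℕ} (ha : n ≤ 2 * a) (hab : a ≤ b) :
    n.choose b ≤ n.choose a := by
  induction b, hab using le_induction with
  | base => rfl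
  | succ b hab ih =>
    refine le_trans (Nat.le_of_mul_le_mul_right ?_ b.succ_pos) ih
    rw [choose_succ_right_eq]
    exact Nat.mul_le_mul_left _ (by omega)

theorem choose_mul_pow_le_choose_add {n a j : ℕ} {ρ : ℝ} (hρ : 0 ≤ ρ)
    (h : ρ * (a + j) ≤ n - (a + j)) : (n.choose a : ℝ) * ρ ^ j ≤ n.choose (a + j) := by
  induction j with
  | zero => simp
  | succ j ih =>
    push_cast at h
    have hlt : a + j < n := by
      have : ((a + j : ℕ) : ℝ) + 1 ≤ n := by push_cast; nlinarith
      exact_mod_cast this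
    have hrec : (n.choose (a + j + 1) : ℝ) * (a + j + 1) = n.choose (a + j) * (n - (a + j)) := by
      have := congrArg (Nat.cast (R := ℝ)) (choose_succ_right_eq n (a + j))
      push_cast [Nat.cast_sub hlt.le] at this
      exact this
    have hstep : (n.choose (a + j) : ℝ) * ρ ≤ n.choose (a + j + 1) := by
      refine le_of_mul_le_mul_right ?_ (by positivity : (0 : ℝ) < a + j + 1)
      rw [hrec, mul_assoc]
      gcongr
      linarith
    calc (n.choose a : ℝ) * ρ ^ (j + 1) = n.choose a * ρ ^ j * ρ := by ring
      _ ≤ n.choose (a + j) * ρ := by gcongr; exact ih (by nlinarith)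
      _ ≤ _ := hstep

theorem choose_mul_exp_le_choose_add {n a j : ℕ} (hn : 0 < n) (ha : 2 * a ≤ n)
    (hj : 4 * j ≤ n) :
    (n.choose a : ℝ) * Real.exp (-(6 * j ^ 2 / n)) ≤ n.choose (a + j) := by
  have hn' : (0 : ℝ) < n := by exact_mod_cast hn
  have ha' : 2 * (a : ℝ) ≤ n := by exact_mod_cast ha
  have hj' : 4 * (j : ℝ) ≤ n := by exact_mod_cast hj
  set ρ : ℝ := (n - 2 * j) / (n + 2 * j)
  have hρ : Real.exp (-(6 * j / n)) ≤ ρ := by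
    have hx := Real.exp_neg_three_mul_le_one_sub_div_one_add (x := 2 * j / n) (by positivity)
      (by rw [div_le_iff₀ hn']; linarith)
    rwa [show 3 * (2 * (j : ℝ) / n) = 6 * j / n by ring,
      show (1 - 2 * (j : ℝ) / n) / (1 + 2 * j / n) = ρ by simp only [ρ]; field_simp] at hx
  have hρ0 : 0 ≤ ρ := div_nonneg (by linarith) (by positivity)
  refine le_trans ?_ (choose_mul_pow_le_choose_add (ρ := ρ) hρ0 ?_)
  · rw [show 6 * (j : ℝ) ^ 2 / n = j * (6 * j / n) by ring, neg_mul_eq_mul_neg, Real.exp_nat_mul]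
    gcongr
  · have : ρ * (n + 2 * j) = n - 2 * j := div_mul_cancel₀ _ (by positivity)
    nlinarith

theorem succ_mul_choose_le_sum_Icc {n K : ℕ} (m : ℕ) (hK : n ≤ 2 * K) :
    (m + 1) * n.choose (K + m) ≤ ∑ k ∈ Icc K (K + m), n.choose k := by
  have := card_nsmul_le_sum (Icc K (K + m)) n.choose (n.choose (K + m))
    fun k hk ↦ choose_le_choose_of_half_le (by grind) (mem_Icc.1 hk).2
  rwa [Nat.card_Icc, show K + m + 1 - K = m + 1 by omega, smul_eq_mul] at this

end Nat

noncomputable def binomialUpperTail (n : ℕ) (x : ℝ) : ℝ :=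
  ∑ k ∈ range (n + 1), if x ≤ k then (n.choose k : ℝ) * (1 / 2) ^ n else 0

theorem sum_Icc_le_binomialUpperTail {n K L : ℕ} {x : ℝ} (hx : x ≤ K) (hL : L ≤ n) :
    ∑ k ∈ Icc K L, (n.choose k : ℝ) * (1 / 2) ^ n ≤ binomialUpperTail n x := by
  rw [binomialUpperTail, ← sum_filter]
  refine sum_le_sum_of_subset_of_nonneg (fun k hk ↦ ?_) fun _ _ _ ↦ by positivity
  have hk := mem_Icc.1 hk
  have : (K : ℝ) ≤ k := by exact_mod_cast hk.1
  exact mem_filter.2 ⟨mem_range.2 (by omega), by linarith⟩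

theorem exp_neg_le_binomialUpperTail {n : ℕ} {x : ℝ} (hx : x ≤ n) :
    Real.exp (-n) ≤ binomialUpperTail n x := by
  have hexp_one : Real.exp (-1) ≤ 1 / 2 := by
    rw [Real.exp_neg, one_div]
    gcongr
    linarith [Real.add_one_le_exp 1]
  calc Real.exp (-n) = Real.exp (-1) ^ n := by rw [← Real.exp_nat_mul]; ring_nf
    _ ≤ (1 / 2) ^ n := by gcongr
    _ ≤ _ := by simpa using sum_Icc_le_binomialUpperTail (n := n) (L := n) hx le_rfl

theorem exp_le_three_mul_binomialUpperTail_of_window {n K j : ℕ} {x : ℝ} (hn : 0 < n)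
    (hx : x ≤ K) (hK : n ≤ 2 * K) (hj : n / 2 + j = K + n.sqrt) (h4j : 4 * j ≤ n) :
    Real.exp (-(6 * j ^ 2 / n)) ≤ 3 * binomialUpperTail n x := by
  set m := n.sqrt
  have hmid : (1 : ℝ) ≤ 3 * (m + 1) * n.choose (n / 2) * (1 / 2) ^ n := by
    have : (2 : ℝ) ^ n ≤ 3 * (m + 1) * n.choose (n / 2) := by
      exact_mod_cast Nat.two_pow_le_three_mul_sqrt_succ_mul_choose_half hn
    rwa [one_div, inv_pow, ← div_eq_mul_inv, one_le_div (by positivity)]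
  have hwindow :
      ((m : ℝ) + 1) * n.choose (K + m) ≤ ∑ k ∈ Icc K (K + m), (n.choose k : ℝ) := by
    exact_mod_cast Nat.succ_mul_choose_le_sum_Icc m hK
  calc Real.exp (-(6 * j ^ 2 / n))
      ≤ 3 * (m + 1) * n.choose (n / 2) * (1 / 2) ^ n * Real.exp (-(6 * j ^ 2 / n)) :=
        le_mul_of_one_le_left (by positivity) hmid
    _ = 3 * (1 / 2) ^ n * ((m + 1) * (n.choose (n / 2) * Real.exp (-(6 * j ^ 2 / n)))) := by ring
    _ ≤ 3 * (1 / 2) ^ n * ((m + 1) * n.choose (K + m)) := by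
      rw [← hj]
      gcongr
      exact Nat.choose_mul_exp_le_choose_add hn (Nat.mul_div_le n 2) h4j
    _ ≤ 3 * (1 / 2) ^ n * ∑ k ∈ Icc K (K + m), (n.choose k : ℝ) := by gcongr
    _ = 3 * ∑ k ∈ Icc K (K + m), (n.choose k : ℝ) * (1 / 2) ^ n := by
      rw [mul_sum, mul_sum]; ring_nf
    _ ≤ 3 * binomialUpperTail n x := by
      gcongr
      exact sum_Icc_le_binomialUpperTail hx (by omega)

theorem exp_le_three_mul_binomialUpperTail {n : ℕ} (hn : 100 ≤ n) {t : ℝ} (ht0 : 0 ≤ t)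
    (ht : t ≤ 1 / 8) :
    Real.exp (-(12 * t ^ 2 * n + 108)) ≤ 3 * binomialUpperTail n (n / 2 + n * t) := by
  set m := n.sqrt
  set K := ⌈(n / 2 + n * t : ℝ)⌉₊
  set j := K + m - n / 2
  have hK : (n / 2 + n * t : ℝ) ≤ K := Nat.le_ceil _
  have hK' : (K : ℝ) < n / 2 + n * t + 1 := Nat.ceil_lt_add_one (by positivity)
  have hm : (m : ℝ) * m ≤ n := by exact_mod_cast n.sqrt_le
  have hm10 : (10 : ℝ) ≤ m := by exact_mod_cast Nat.le_sqrt.2 hn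
  have hnK : n ≤ 2 * K := by
    have : (n : ℝ) ≤ 2 * K := by nlinarith
    exact_mod_cast this
  have hj : n / 2 + j = K + m := by omega
  have hj' : (j : ℝ) ≤ n * t + m + 2 := by
    have h1 : ((n / 2 + j : ℕ) : ℝ) = K + m := by exact_mod_cast hj
    have h2 : (n : ℝ) ≤ 2 * ((n / 2 : ℕ) : ℝ) + 1 := by
      exact_mod_cast (by omega : n ≤ 2 * (n / 2) + 1)
    push_cast at h1
    linarith
  have h4j : 4 * j ≤ n := by
    have : 4 * (j : ℝ) ≤ n := by nlinarith
    exact_mod_cast this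
  have hexponent : 6 * (j : ℝ) ^ 2 / n ≤ 12 * t ^ 2 * n + 108 := by
    rw [div_le_iff₀ (by positivity)]
    nlinarith [sq_nonneg ((n : ℝ) * t - (m + 2)), pow_le_pow_left₀ (Nat.cast_nonneg j) hj' 2]
  calc Real.exp (-(12 * t ^ 2 * n + 108)) ≤ Real.exp (-(6 * j ^ 2 / n)) := by gcongr
    _ ≤ _ := exp_le_three_mul_binomialUpperTail_of_window (by omega) hK hnK hj h4j

/-- Anti-concentration of the symmetric binomial: there exist universal constants
`c₁, c₂ > 0` such that for `X ∼ Bin(n, 1/2)` and any `t ∈ [0, 1/8]`,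
`P(X ≥ n/2 + nt) ≥ c₁ e^{−c₂ t² n}`. -/
theorem binomial_anti_concentration :
    ∃ c₁ : ℝ, 0 < c₁ ∧ ∃ c₂ : ℝ, 0 < c₂ ∧
      ∀ (n : ℕ) (t : ℝ), 0 ≤ t → t ≤ 1 / 8 →
        c₁ * Real.exp (-c₂ * t ^ 2 * n)
          ≤ ∑ k ∈ Finset.range (n + 1),
              if (n : ℝ) / 2 + n * t ≤ k then (n.choose k : ℝ) * (1 / 2) ^ n else 0 := by
  refine ⟨Real.exp (-108) / 3, by positivity, 12, by norm_num, fun n t ht0 ht ↦ ?_⟩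
  change _ ≤ binomialUpperTail n _
  rcases lt_or_ge n 100 with hn | hn
  · have hn' : (n : ℝ) ≤ 100 := by exact_mod_cast hn.le
    calc Real.exp (-108) / 3 * Real.exp (-12 * t ^ 2 * n)
        ≤ Real.exp (-n) * 1 := by
          refine mul_le_mul ?_ (Real.exp_le_one_iff.2 (by nlinarith [sq_nonneg t])) (by positivity)
            (by positivity)
          linarith [Real.exp_le_exp.2 (show -108 ≤ -(n : ℝ) by linarith), Real.exp_pos (-108)]
      _ ≤ _ := by rw [mul_one]; exact exp_neg_le_binomialUpperTail (by nlinarith)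
  · calc Real.exp (-108) / 3 * Real.exp (-12 * t ^ 2 * n)
        = Real.exp (-(12 * t ^ 2 * n + 108)) / 3 := by
          rw [div_mul_eq_mul_div, ← Real.exp_add]; ring_nf
      _ ≤ _ := by linarith [exp_le_three_mul_binomialUpperTail hn ht0 ht]
end

section
/- Robust policy improvement core inequality: suppose f_k minimizes f ↦ L_D(π_k, f) + β·E_D(π_k, f) over F, that E_D(π_k, f_{π_k}) ≤ ε₂, that |L_μ − L_D| ≤ ε₁ uniformly, |L_μ(π_k, Q^{π_k}) − L_μ(π_k, f_{π_k})| ≤ ε₃, and E_D ≥ 0. Then L_μ(π_k, f_k) − L_μ(π_k, Q^{π_k}) ≤ 2ε₁ + βε₂ + ε₃. -/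
open Finset

/-- Robust policy improvement core inequality: if `f_k` minimizes
`f ↦ L_D(π_k, f) + β E_D(π_k, f)` over `F`, `E_D(π_k, f_{π_k}) ≤ ε₂`,
`|L_μ − L_D| ≤ ε₁` uniformly, `|L_μ(π_k, Q^{π_k}) − L_μ(π_k, f_{π_k})| ≤ ε₃`,
and `E_D ≥ 0`, then `L_μ(π_k, f_k) − L_μ(π_k, Q^{π_k}) ≤ 2ε₁ + βε₂ + ε₃`. -/
theorem rpi_core_inequality {P Fn : Type*} (F : Finset Fn)
    (Lμ LD : P → Fn → ℝ) (ED : P → Fn → ℝ)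
    (β ε₁ ε₂ ε₃ : ℝ) (hβ : 0 ≤ β)
    (πk : P) (fk fπk : Fn) (LμQ : ℝ)
    (hfk : fk ∈ F) (hfπk : fπk ∈ F)
    (hmin : ∀ f ∈ F, LD πk fk + β * ED πk fk ≤ LD πk f + β * ED πk f)
    (hED : ED πk fπk ≤ ε₂)
    (hclose : ∀ π f, |Lμ π f - LD π f| ≤ ε₁)
    (hQ : |LμQ - Lμ πk fπk| ≤ ε₃)
    (hEDnonneg : ∀ π f, 0 ≤ ED π f) :
    Lμ πk fk - LμQ ≤ 2 * ε₁ + β * ε₂ + ε₃ := by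
  have h1 := abs_le.mp (hclose πk fk)
  have h2 := abs_le.mp (hclose πk fπk)
  have h3 := abs_le.mp hQ
  have h4 := hmin fπk hfπk
  have h5 := hEDnonneg πk fk
  have h6 : β * ED πk fπk ≤ β * ε₂ := mul_le_mul_of_nonneg_left hED hβ
  have h7 : β * ED πk fk ≥ 0 := mul_nonneg hβ h5
  nlinarith
end
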